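/- Under the same setting (subshift of finite type X, A Lipschitz, non-positive, m(A)=0, Mañé potential S), if σ(x) = y, then S(x,y) = A(x). -/

import Mathlib

open Filter MeasureTheory Classical

/-- The left shift on one-sided sequences. -/
def shift {m : ℕ} (x : ℕ → Fin m) : ℕ → Fin m := fun n => x (n + 1)

/-- The metric `d(x,y) = θ^{min{i : x_i ≠ y_i}}` on sequence space. -/
noncomputable def shiftDist (θ : ℝ) {m : ℕ} (x y : ℕ → Fin m) : ℝ :=
  if x = y then 0 else θ ^ sInf {i : ℕ | x i ≠ y i}

/-- The Birkhoff sum `S_n(A) = A + A∘σ + ... + A∘σ^{n-1}`. -/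
noncomputable def birkhoff {m : ℕ} (A : (ℕ → Fin m) → ℝ) (n : ℕ) (x : ℕ → Fin m) : ℝ :=
  ∑ i ∈ Finset.range n, A (shift^[i] x)

/-- The Mañé potential
`S(x,y) = lim_{ε→0} sup {S_n(A)(z) : σⁿ(z) = y, d(x,z) < ε, n ≥ 1, z ∈ X}`,
with values in the extended reals. -/
noncomputable def manePotential {m : ℕ} (θ : ℝ) (X : Set (ℕ → Fin m))
    (A : (ℕ → Fin m) → ℝ) (x y : ℕ → Fin m) : EReal :=
  ⨅ (ε : ℝ) (_ : 0 < ε),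
    sSup {v : EReal | ∃ n : ℕ, 1 ≤ n ∧ ∃ z ∈ X,
      shift^[n] z = y ∧ shiftDist θ x z < ε ∧ v = (birkhoff A n z : EReal)}

/-- `X` is a subshift of finite type: the sequences avoiding a finite set of
forbidden words. -/
def IsSFT {m : ℕ} (X : Set (ℕ → Fin m)) : Prop :=
  ∃ F : Set (List (Fin m)), F.Finite ∧
    X = {x | ∀ (i l : ℕ), List.ofFn (fun j : Fin l => x (i + j)) ∉ F}

/-- `m(A) = 0`: the supremum of `∫ A dν` over shift-invariant probability
measures giving full mass to `X` is zero. -/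
def MaxIntegralZero {m : ℕ} (X : Set (ℕ → Fin m)) (A : (ℕ → Fin m) → ℝ) : Prop :=
  sSup {r : ℝ | ∃ ν : Measure (ℕ → Fin m), IsProbabilityMeasure ν ∧
    ν.map shift = ν ∧ ν X = 1 ∧ r = ∫ x, A x ∂ν} = 0

/-! Taking `z = x`, `n = 1` in the supremum gives `A x ≤ S(x, y)`. Conversely, since `A ≤ 0`
every Birkhoff sum is bounded by its first term, `S_n(A)(z) ≤ A z`, and `A z` is close to `A x`
when `z` is close to `x`, by the Lipschitz bound. -/

section ManePotential

variable {m : ℕ} {θ : ℝ} {X : Set (ℕ → Fin m)} {A : (ℕ → Fin m) → ℝ}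

lemma shiftDist_self (θ : ℝ) (x : ℕ → Fin m) : shiftDist θ x x = 0 := if_pos rfl

lemma shiftDist_nonneg (hθ : 0 ≤ θ) (x y : ℕ → Fin m) : 0 ≤ shiftDist θ x y := by
  unfold shiftDist
  split_ifs
  exacts [le_rfl, pow_nonneg hθ _]

lemma birkhoff_one (A : (ℕ → Fin m) → ℝ) (x : ℕ → Fin m) : birkhoff A 1 x = A x := by
  simp [birkhoff]

lemma birkhoff_le_of_nonpos (hX : Set.MapsTo shift X X) (hA : ∀ x ∈ X, A x ≤ 0)
    {z : ℕ → Fin m} (hz : z ∈ X) {n : ℕ} (hn : 1 ≤ n) : birkhoff A n z ≤ A z := by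
  obtain ⟨k, rfl⟩ := Nat.exists_eq_add_of_le' hn
  have htail : ∑ i ∈ Finset.range k, A (shift^[i + 1] z) ≤ 0 :=
    Finset.sum_nonpos fun i _ => hA _ (hX.iterate (i + 1) hz)
  rw [birkhoff, Finset.sum_range_succ']
  simpa using htail

lemma exists_pos_lipschitz_const (hθ : 0 ≤ θ)
    (hA : ∃ C : ℝ, ∀ x ∈ X, ∀ y ∈ X, |A x - A y| ≤ C * shiftDist θ x y) :
    ∃ C > 0, ∀ x ∈ X, ∀ y ∈ X, |A x - A y| ≤ C * shiftDist θ x y := by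
  obtain ⟨C, hC⟩ := hA
  refine ⟨max C 0 + 1, by positivity, fun x hx y hy => (hC x hx y hy).trans ?_⟩
  gcongr
  · exact shiftDist_nonneg hθ x y
  · exact (le_max_left C 0).trans (le_add_of_nonneg_right zero_le_one)

lemma le_manePotential_of_shift_eq {x y : ℕ → Fin m} (hx : x ∈ X) (hxy : shift x = y) :
    (A x : EReal) ≤ manePotential θ X A x y := by
  refine le_iInf₂ fun ε hε => le_sSup ⟨1, le_rfl, x, hx, hxy, ?_, ?_⟩
  · rwa [shiftDist_self]
  · rw [birkhoff_one]

lemma manePotential_le_of_nonpos (hθ : 0 ≤ θ) (hX : Set.MapsTo shift X X)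
    (hALip : ∃ C : ℝ, ∀ x ∈ X, ∀ y ∈ X, |A x - A y| ≤ C * shiftDist θ x y)
    (hA : ∀ x ∈ X, A x ≤ 0) {x : ℕ → Fin m} (hx : x ∈ X) (y : ℕ → Fin m) :
    manePotential θ X A x y ≤ A x := by
  obtain ⟨C, hC0, hC⟩ := exists_pos_lipschitz_const hθ hALip
  refine EReal.le_of_forall_lt_iff_le.mp fun r hr => ?_
  have hr : A x < r := EReal.coe_lt_coe_iff.mp hr
  have hε : 0 < (r - A x) / C := div_pos (sub_pos.mpr hr) hC0
  refine (iInf₂_le _ hε).trans (sSup_le ?_)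
  rintro v ⟨n, hn, z, hz, -, hxz, rfl⟩
  have hAz : A z ≤ A x + C * shiftDist θ x z := by
    linarith [neg_abs_le (A x - A z), hC x hx z hz]
  have hCxz : C * shiftDist θ x z < r - A x := by
    rwa [lt_div_iff₀' hC0] at hxz
  exact EReal.coe_le_coe_iff.mpr (by linarith [birkhoff_le_of_nonpos hX hA hz hn])

end ManePotential

theorem stmt17_general (d : ℕ) (θ : ℝ) (hθ0 : 0 < θ)
    (X : Set (ℕ → Fin (d + 1)))
    (hXinv : ∀ x ∈ X, shift x ∈ X)
    (A : (ℕ → Fin (d + 1)) → ℝ)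
    (hALip : ∃ C : ℝ, ∀ x ∈ X, ∀ y ∈ X, |A x - A y| ≤ C * shiftDist θ x y)
    (hAneg : ∀ x ∈ X, A x ≤ 0)
    (x y : ℕ → Fin (d + 1)) (hx : x ∈ X)
    (hσ : shift x = y) :
    manePotential θ X A x y = (A x : EReal) :=
  le_antisymm (manePotential_le_of_nonpos hθ0.le hXinv hALip hAneg hx y)
    (le_manePotential_of_shift_eq hx hσ)

theorem stmt17 (d : ℕ) (θ : ℝ) (hθ0 : 0 < θ) (hθ1 : θ < 1)
    (X : Set (ℕ → Fin (d + 1))) (hXc : IsClosed X)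
    (hXinv : ∀ x ∈ X, shift x ∈ X) (hSFT : IsSFT X)
    (A : (ℕ → Fin (d + 1)) → ℝ)
    (hALip : ∃ C : ℝ, ∀ x ∈ X, ∀ y ∈ X, |A x - A y| ≤ C * shiftDist θ x y)
    (hAneg : ∀ x ∈ X, A x ≤ 0)
    (hmA : MaxIntegralZero X A)
    (x y : ℕ → Fin (d + 1)) (hx : x ∈ X) (hy : y ∈ X)
    (hσ : shift x = y) :
    manePotential θ X A x y = (A x : EReal) :=
  stmt17_general d θ hθ0 X hXinv A hALip hAneg x y hx hσ
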